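/- arXiv:2010.13475 — 2 statements merged into one kernel-verified Lean document; each statement's English description precedes it below -/
import Mathlib

section
/- Let n ≥ 1 and let Γ = Γ(U_{6n}) be the non-commuting graph of U_{6n}. Then for 0 ≤ r ≤ n−1 and k ∈ {1,2}: (1) deg_Γ(a^{2r+1}) = 4n; (2) deg_Γ(a^{2r+1}b^k) = 4n; (3) deg_Γ(a^{2r}b^k) = 3n. -/
/-- The inversion automorphism of `Multiplicative (ZMod 3)` (i.e. `b ↦ b⁻¹`). -/
def negAut : MulAut (Multiplicative (ZMod 3)) := MulEquiv.inv (Multiplicative (ZMod 3))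

lemma negAut_sq : negAut * negAut = 1 := by
  ext x
  simp [negAut]

/-- The action of `ZMod (2*n)` on `Multiplicative (ZMod 3)`, where the generator acts
by inversion (negation). -/
def U6nAct (n : ℕ) : Multiplicative (ZMod (2 * n)) →* MulAut (Multiplicative (ZMod 3)) :=
  AddMonoidHom.toMultiplicativeLeft
    (ZMod.lift (2 * n) ⟨zmultiplesHom _ (Additive.ofMul negAut), by
      show ((2 * n : ℕ) : ℤ) • Additive.ofMul negAut = 0
      have : negAut ^ (2 * n) = 1 := by
        rw [pow_mul, pow_two, negAut_sq, one_pow]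
      rw [← zpow_natCast negAut, Nat.cast_mul] at this
      rw [show ((2 * n : ℕ) : ℤ) • Additive.ofMul negAut
            = Additive.ofMul (negAut ^ ((2 * n : ℕ) : ℤ)) from rfl]
      rw [Nat.cast_mul, this]; rfl⟩)

/-- The group `U_{6n} = ⟨a, b | a^(2n) = b³ = 1, a⁻¹ b a = b⁻¹⟩`, realized as the
semidirect product `(ZMod 3) ⋊ (ZMod (2n))` where the generator of `ZMod (2n)` acts by
negation. -/
abbrev U6n (n : ℕ) := SemidirectProduct (Multiplicative (ZMod 3))
    (Multiplicative (ZMod (2 * n))) (U6nAct n)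

/-- The generator `a` of `U_{6n}`, of order `2n`. -/
def Ua (n : ℕ) : U6n n := SemidirectProduct.inr (Multiplicative.ofAdd 1)

/-- The generator `b` of `U_{6n}`, of order `3`. -/
def Ub (n : ℕ) : U6n n := SemidirectProduct.inl (Multiplicative.ofAdd 1)

/-- The non-commuting graph of `U_{6n}`: vertices are the non-central elements, two
distinct vertices are adjacent iff they do not commute. -/
def ncGraph (n : ℕ) : SimpleGraph {x : U6n n // x ∉ Subgroup.center (U6n n)} where
  Adj u v := u.val * v.val ≠ v.val * u.val
  symm := ⟨fun _ _ h => fun e => h e.symm⟩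
  loopless := ⟨fun _ h => h rfl⟩

/-!
The degree of a non-central `x` in the non-commuting graph of a finite group `G` is
`|G| - |C_G(x)|`. In `U_{6n} = C₃ ⋊ C_{2n}` the action has kernel `K` of index 2 (the even
residues) and acts by inversion outside `K`; since squaring is injective on `C₃`, the
commutation equation for `x = (u, s)` and `y = (v, t)` can be solved explicitly:
* if `s ∉ K`, then `y` commutes with `x` iff `v = 1` (for `t ∈ K`) or `v = u` (for `t ∉ K`), so
  `C(x)` is the graph of a function on `C_{2n}` and `|C(x)| = 2n`;
* if `s ∈ K` and `u ≠ 1`, then `C(x) = C₃ ⋊ K`, of index 2, so `|C(x)| = 3n`.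
The vertices `a^(2r+1)` and `a^(2r+1) b^k` are of the first kind, `a^(2r) b^k` of the second.
-/

open Subgroup

def nonCommutingGraph (G : Type*) [Group G] : SimpleGraph {x : G // x ∉ center G} where
  Adj u v := u.val * v.val ≠ v.val * u.val
  symm := ⟨fun _ _ h => fun e => h e.symm⟩
  loopless := ⟨fun _ h => h rfl⟩

theorem ncGraph_eq (n : ℕ) : ncGraph n = nonCommutingGraph (U6n n) := rfl

theorem ncard_neighborSet_nonCommutingGraph {G : Type*} [Group G] [Finite G] (x : G)
    (hx : x ∉ center G) :
    ((nonCommutingGraph G).neighborSet ⟨x, hx⟩).ncard =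
      Nat.card G - Nat.card (centralizer {x}) := by
  have himage : Subtype.val '' (nonCommutingGraph G).neighborSet ⟨x, hx⟩ =
      (centralizer {x} : Set G)ᶜ := by
    ext y
    simp only [Set.mem_image, SimpleGraph.mem_neighborSet, Set.mem_compl_iff, SetLike.mem_coe,
      mem_centralizer_singleton_iff]
    constructor
    · rintro ⟨y, hxy, rfl⟩
      exact Ne.symm hxy
    · intro hyx
      exact ⟨⟨y, fun hy => hyx (mem_center_iff.mp hy x).symm⟩, Ne.symm hyx, rfl⟩
  rw [← Set.ncard_image_of_injective _ Subtype.val_injective, himage, Set.ncard_compl]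
  rfl

theorem self_eq_inv_iff_of_injective_sq {N : Type*} [Group N]
    (hsq : Function.Injective fun b : N => b ^ 2) {a : N} : a = a⁻¹ ↔ a = 1 := by
  rw [eq_inv_iff_mul_eq_one, ← sq]
  exact hsq.eq_iff' (one_pow 2)

namespace SemidirectProduct

variable {N G : Type*} [CommGroup G]

section Group

variable [Group N] {φ : G →* MulAut N}

theorem commute_iff {x y : N ⋊[φ] G} :
    Commute x y ↔ x.left * φ x.right y.left = y.left * φ y.right x.left := by
  rw [Commute, SemiconjBy, SemidirectProduct.ext_iff, mul_left, mul_left, mul_right, mul_right,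
    mul_comm x.right, and_iff_left rfl]

theorem card_subtype_left_eq (f : G → N) :
    Nat.card {y : N ⋊[φ] G // y.left = f y.right} = Nat.card G :=
  Nat.card_congr
    { toFun := fun y => y.val.right
      invFun := fun g => ⟨⟨f g, g⟩, rfl⟩
      left_inv := fun y => Subtype.ext (SemidirectProduct.ext y.prop.symm rfl)
      right_inv := fun _ => rfl }

end Group

variable [CommGroup N] {φ : G →* MulAut N}

open scoped Classical in
theorem mem_centralizer_singleton_iff_of_right_notMem_ker
    (hinv : ∀ g ∉ φ.ker, ∀ b, φ g b = b⁻¹) (hsq : Function.Injective fun b : N => b ^ 2)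
    {x y : N ⋊[φ] G} (hx : x.right ∉ φ.ker) :
    y ∈ centralizer {x} ↔ y.left = if y.right ∈ φ.ker then 1 else x.left := by
  rw [mem_centralizer_singleton_iff, ← commute_iff_eq, commute_iff, hinv _ hx]
  by_cases hy : y.right ∈ φ.ker
  · rw [if_pos hy, MonoidHom.mem_ker.mp hy, MulAut.one_apply, mul_comm x.left,
      mul_right_cancel_iff, self_eq_inv_iff_of_injective_sq hsq]
  · rw [if_neg hy, hinv _ hy, ← div_eq_mul_inv, ← div_eq_mul_inv, div_eq_div_iff_mul_eq_mul,
      ← sq, ← sq]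
    exact hsq.eq_iff

theorem centralizer_singleton_eq_comap_rightHom_ker
    (hinv : ∀ g ∉ φ.ker, ∀ b, φ g b = b⁻¹) (hsq : Function.Injective fun b : N => b ^ 2)
    {x : N ⋊[φ] G} (hx : x.right ∈ φ.ker) (hx₁ : x.left ≠ 1) :
    centralizer {x} = φ.ker.comap rightHom := by
  ext y
  rw [mem_centralizer_singleton_iff, ← commute_iff_eq, commute_iff, mem_comap, rightHom_eq_right,
    MonoidHom.mem_ker.mp hx, MulAut.one_apply]
  by_cases hy : y.right ∈ φ.ker
  · rw [MonoidHom.mem_ker.mp hy, MulAut.one_apply, mul_comm]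
    exact iff_of_true rfl hy
  · rw [hinv _ hy, mul_comm x.left, mul_left_cancel_iff, inv_eq_iff_eq_inv,
      self_eq_inv_iff_of_injective_sq hsq]
    exact iff_of_false hx₁ hy

theorem card_centralizer_singleton_of_right_notMem_ker
    (hinv : ∀ g ∉ φ.ker, ∀ b, φ g b = b⁻¹) (hsq : Function.Injective fun b : N => b ^ 2)
    {x : N ⋊[φ] G} (hx : x.right ∉ φ.ker) :
    Nat.card (centralizer {x}) = Nat.card G := by
  classical
  rw [← card_subtype_left_eq (φ := φ) fun g => if g ∈ φ.ker then 1 else x.left]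
  exact Nat.card_congr (Equiv.subtypeEquivRight fun _ =>
    mem_centralizer_singleton_iff_of_right_notMem_ker hinv hsq hx)

theorem index_centralizer_singleton_of_right_mem_ker
    (hinv : ∀ g ∉ φ.ker, ∀ b, φ g b = b⁻¹) (hsq : Function.Injective fun b : N => b ^ 2)
    {x : N ⋊[φ] G} (hx : x.right ∈ φ.ker) (hx₁ : x.left ≠ 1) :
    (centralizer {x}).index = φ.ker.index := by
  rw [centralizer_singleton_eq_comap_rightHom_ker hinv hsq hx hx₁,
    index_comap_of_surjective _ rightHom_surjective]

end SemidirectProduct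

theorem negAut_ne_one : negAut ≠ 1 := fun h => by
  have := DFunLike.congr_fun h (Multiplicative.ofAdd 1)
  revert this
  decide

theorem orderOf_negAut : orderOf negAut = 2 :=
  orderOf_eq_prime (by rw [sq, negAut_sq]) negAut_ne_one

theorem injective_sq_multiplicative_zmod_three :
    Function.Injective fun b : Multiplicative (ZMod 3) => b ^ 2 := by
  decide

theorem U6nAct_ofAdd_one (n : ℕ) : U6nAct n (Multiplicative.ofAdd 1) = negAut := by
  rw [U6nAct, AddMonoidHom.toMultiplicativeLeft_apply_apply, toAdd_ofAdd, ← Int.cast_one,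
    ZMod.lift_coe]
  simp

theorem zpowers_ofAdd_one_eq_top (m : ℕ) :
    zpowers (Multiplicative.ofAdd (1 : ZMod m)) = ⊤ := by
  refine eq_top_iff' _ |>.mpr fun t => ?_
  obtain ⟨z, hz⟩ := ZMod.intCast_surjective t.toAdd
  exact ⟨z, show Multiplicative.ofAdd 1 ^ z = t by rw [← ofAdd_zsmul, zsmul_one, hz, ofAdd_toAdd]⟩

theorem range_U6nAct (n : ℕ) : (U6nAct n).range = zpowers negAut := by
  rw [MonoidHom.range_eq_map, ← zpowers_ofAdd_one_eq_top, MonoidHom.map_zpowers, U6nAct_ofAdd_one]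

theorem index_ker_U6nAct (n : ℕ) : (U6nAct n).ker.index = 2 := by
  rw [index_ker, range_U6nAct, Nat.card_zpowers, orderOf_negAut]

theorem U6nAct_apply_of_notMem_ker {n : ℕ} {t : Multiplicative (ZMod (2 * n))}
    (ht : t ∉ (U6nAct n).ker) (b : Multiplicative (ZMod 3)) : U6nAct n t b = b⁻¹ := by
  obtain ⟨z, hz⟩ := mem_zpowers_iff.mp (range_U6nAct n ▸ MonoidHom.mem_range.mpr ⟨t, rfl⟩)
  rw [MonoidHom.mem_ker, ← hz, ← zpow_mod_orderOf, orderOf_negAut] at ht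
  rw [← hz, ← zpow_mod_orderOf, orderOf_negAut]
  rcases Int.emod_two_eq_zero_or_one z with h | h
  · simp [h] at ht
  · simp [h, negAut]

theorem ofAdd_one_pow_mem_ker_U6nAct_iff (n m : ℕ) :
    Multiplicative.ofAdd 1 ^ m ∈ (U6nAct n).ker ↔ Even m := by
  rw [MonoidHom.mem_ker, map_pow, U6nAct_ofAdd_one, ← orderOf_dvd_iff_pow_eq_one, orderOf_negAut,
    even_iff_two_dvd]

theorem card_U6n (n : ℕ) : Nat.card (U6n n) = 6 * n := by
  rw [SemidirectProduct.card, Nat.card_congr Multiplicative.toAdd,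
    Nat.card_congr Multiplicative.toAdd, Nat.card_zmod, Nat.card_zmod]
  ring

theorem card_centralizer_U6n_of_right_notMem_ker {n : ℕ} {x : U6n n}
    (hx : x.right ∉ (U6nAct n).ker) : Nat.card (centralizer {x}) = 2 * n := by
  rw [SemidirectProduct.card_centralizer_singleton_of_right_notMem_ker
      (fun _ => U6nAct_apply_of_notMem_ker) injective_sq_multiplicative_zmod_three hx,
    Nat.card_congr Multiplicative.toAdd, Nat.card_zmod]

theorem card_centralizer_U6n_of_right_mem_ker {n : ℕ} {x : U6n n}
    (hx : x.right ∈ (U6nAct n).ker) (hx₁ : x.left ≠ 1) : Nat.card (centralizer {x}) = 3 * n := by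
  have := card_mul_index (centralizer {x})
  rw [SemidirectProduct.index_centralizer_singleton_of_right_mem_ker
      (fun _ => U6nAct_apply_of_notMem_ker) injective_sq_multiplicative_zmod_three hx hx₁,
    index_ker_U6nAct, card_U6n] at this
  omega

theorem right_Ua_pow (n m : ℕ) : (Ua n ^ m).right = Multiplicative.ofAdd 1 ^ m := by
  simp [Ua, ← map_pow]

theorem Ua_pow_mul_Ub_pow (n m k : ℕ) :
    Ua n ^ m * Ub n ^ k = ⟨U6nAct n (Multiplicative.ofAdd 1 ^ m) (Multiplicative.ofAdd 1 ^ k),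
      Multiplicative.ofAdd 1 ^ m⟩ := by
  ext <;> simp [Ua, Ub, ← map_pow]

theorem U6n_degrees_general (n : ℕ) (hn : 1 ≤ n) (r : ℕ) (k : ℕ)
    (hk : k = 1 ∨ k = 2) :
    (∀ h : Ua n ^ (2 * r + 1) ∉ Subgroup.center (U6n n),
      ((ncGraph n).neighborSet ⟨Ua n ^ (2 * r + 1), h⟩).ncard = 4 * n) ∧
    (∀ h : Ua n ^ (2 * r + 1) * Ub n ^ k ∉ Subgroup.center (U6n n),
      ((ncGraph n).neighborSet ⟨Ua n ^ (2 * r + 1) * Ub n ^ k, h⟩).ncard = 4 * n) ∧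
    (∀ h : Ua n ^ (2 * r) * Ub n ^ k ∉ Subgroup.center (U6n n),
      ((ncGraph n).neighborSet ⟨Ua n ^ (2 * r) * Ub n ^ k, h⟩).ncard = 3 * n) := by
  have : Finite (U6n n) := Nat.finite_of_card_ne_zero (by rw [card_U6n]; omega)
  have hodd : Multiplicative.ofAdd 1 ^ (2 * r + 1) ∉ (U6nAct n).ker := by
    rw [ofAdd_one_pow_mem_ker_U6nAct_iff, Nat.not_even_iff_odd]
    exact odd_two_mul_add_one r
  have heven : Multiplicative.ofAdd 1 ^ (2 * r) ∈ (U6nAct n).ker :=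
    (ofAdd_one_pow_mem_ker_U6nAct_iff n _).mpr (even_two_mul r)
  have hbk : (Multiplicative.ofAdd 1 ^ k : Multiplicative (ZMod 3)) ≠ 1 := by
    rcases hk with rfl | rfl <;> decide
  refine ⟨fun h => ?_, fun h => ?_, fun h => ?_⟩ <;>
    rw [ncGraph_eq, ncard_neighborSet_nonCommutingGraph, card_U6n]
  · rw [card_centralizer_U6n_of_right_notMem_ker (by rwa [right_Ua_pow])]
    omega
  · rw [card_centralizer_U6n_of_right_notMem_ker (by rwa [Ua_pow_mul_Ub_pow])]
    omega
  · rw [card_centralizer_U6n_of_right_mem_ker (by rwa [Ua_pow_mul_Ub_pow])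
      (by rwa [Ua_pow_mul_Ub_pow, MonoidHom.mem_ker.mp heven])]
    omega

/-- Degrees in the non-commuting graph of `U_{6n}`: for `0 ≤ r ≤ n-1` and `k ∈ {1,2}`,
the vertices `a^(2r+1)` and `a^(2r+1)·b^k` have degree `4n`, and the vertices
`a^(2r)·b^k` have degree `3n`. -/
theorem U6n_degrees (n : ℕ) (hn : 1 ≤ n) (r : ℕ) (hr : r < n) (k : ℕ)
    (hk : k = 1 ∨ k = 2) :
    (∀ h : Ua n ^ (2 * r + 1) ∉ Subgroup.center (U6n n),
      ((ncGraph n).neighborSet ⟨Ua n ^ (2 * r + 1), h⟩).ncard = 4 * n) ∧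
    (∀ h : Ua n ^ (2 * r + 1) * Ub n ^ k ∉ Subgroup.center (U6n n),
      ((ncGraph n).neighborSet ⟨Ua n ^ (2 * r + 1) * Ub n ^ k, h⟩).ncard = 4 * n) ∧
    (∀ h : Ua n ^ (2 * r) * Ub n ^ k ∉ Subgroup.center (U6n n),
      ((ncGraph n).neighborSet ⟨Ua n ^ (2 * r) * Ub n ^ k, h⟩).ncard = 3 * n) :=
  U6n_degrees_general n hn r k hk
end

section
/- Let n ≥ 1 and let Γ = Γ(U_{6n}) be the non-commuting graph of U_{6n}. For every pair of distinct vertices u, v of Γ, the detour distance D(u, v) equals 5n − 1; that is, the longest path in Γ between any two distinct vertices has length 5n − 1 (it is a Hamiltonian path, visiting all 5n vertices). -/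
open Finset

namespace SimpleGraph

variable {V P : Type*} [DecidableEq V] [DecidableEq P]

/-- Necessary for a `u`–`v` path through all of `s` whose consecutive vertices lie in distinct
fibres of `f`: each fibre then fills at most every other vertex of the path. -/
def IsBalanced (f : V → P) (s : Finset V) (u v : V) : Prop :=
  ∀ q, 2 * #{x ∈ s | f x = q} + 1 ≤
    #s + (if f u = q then 1 else 0) + (if f v = q then 1 else 0)

variable {f : V → P} {s : Finset V} {u v : V}

lemma card_filter_erase_add (f : V → P) (hu : u ∈ s) (q : P) :
    #{x ∈ s.erase u | f x = q} + (if f u = q then 1 else 0) = #{x ∈ s | f x = q} := by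
  rw [filter_erase]
  split_ifs with h
  · exact card_erase_add_one (mem_filter.mpr ⟨hu, h⟩)
  · rw [erase_eq_of_notMem (by simp [h]), add_zero]

lemma exists_mem_ne_of_card_erase_pos {r : Finset V} (h : 0 < #(r.erase v)) :
    ∃ w ∈ r, w ≠ v := by
  obtain ⟨w, hw⟩ := card_pos.mp h
  exact ⟨w, mem_of_mem_erase hw, ne_of_mem_erase hw⟩

/-- A fibre that must contain the next vertex `w` of a path through `t`, or else
`IsBalanced f t w v` fails. -/
def IsTightFiber (f : V → P) (t : Finset V) (v : V) (q : P) : Prop :=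
  2 * #{x ∈ t | f x = q} = #t + (if f v = q then 1 else 0)

lemma IsTightFiber.eq {t : Finset V} {q q' : P} (hvt : v ∈ t) (hq : IsTightFiber f t v q)
    (hq' : IsTightFiber f t v q') : q = q' := by
  by_contra hqq'
  have hsum : #{x ∈ t | f x = q} + #{x ∈ t | f x = q'} = #{x ∈ t | f x = q ∨ f x = q'} := by
    rw [filter_or, card_union_of_disjoint
      (disjoint_filter.mpr fun _ _ h h' => hqq' (h.symm.trans h'))]
  unfold IsTightFiber at hq hq'
  by_cases hvq : f v = q ∨ f v = q'
  · have hle := card_filter_le t (fun x => f x = q ∨ f x = q')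
    have : 1 ≤ (if f v = q then 1 else 0) + (if f v = q' then 1 else 0) := by
      rcases hvq with h | h <;> simp [h]
    omega
  · -- neither tight fibre contains `v`, so together they miss a vertex of `t`
    have hlt := card_lt_card
      (filter_ssubset (p := fun x => f x = q ∨ f x = q') |>.mpr ⟨v, hvt, hvq⟩)
    rw [not_or] at hvq
    rw [if_neg hvq.1] at hq
    rw [if_neg hvq.2] at hq'
    omega

lemma IsBalanced.erase {w : V} (hs : IsBalanced f s u v) (hu : u ∈ s) (hw : f w ≠ f u)
    (htight : ∀ q, q ≠ f u → IsTightFiber f (s.erase u) v q → q = f w) :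
    IsBalanced f (s.erase u) w v := by
  intro q
  have hq := hs q
  have hcard := card_filter_erase_add f hu q
  have herase : #(s.erase u) + 1 = #s := card_erase_add_one hu
  by_cases hqu : f u = q
  · subst hqu
    simp only [if_pos, if_neg hw] at hq hcard ⊢
    omega
  · by_cases hqw : f w = q
    · simp only [if_neg hqu, if_pos hqw] at hq hcard ⊢
      omega
    · have hloose := mt (htight q (Ne.symm hqu)) (Ne.symm hqw)
      unfold IsTightFiber at hloose
      simp only [if_neg hqu, if_neg hqw] at hq hcard ⊢
      omega

lemma IsBalanced.exists_next (hs : IsBalanced f s u v) (hu : u ∈ s) (hv : v ∈ s) (huv : u ≠ v)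
    (h3 : 3 ≤ #s) :
    ∃ w ∈ s.erase u, w ≠ v ∧ f w ≠ f u ∧ IsBalanced f (s.erase u) w v := by
  set t := s.erase u
  have hvt : v ∈ t := mem_erase.mpr ⟨huv.symm, hv⟩
  have ht : #t + 1 = #s := card_erase_add_one hu
  by_cases hex : ∃ q, q ≠ f u ∧ IsTightFiber f t v q
  · obtain ⟨q, hqu, hq⟩ := hex
    obtain ⟨w, hw, hwv⟩ : ∃ w ∈ {x ∈ t | f x = q}, w ≠ v := by
      refine exists_mem_ne_of_card_erase_pos ?_
      rw [card_erase_eq_ite]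
      simp only [IsTightFiber, mem_filter, hvt, true_and] at hq ⊢
      split_ifs at hq ⊢ <;> omega
    obtain ⟨hwt, rfl⟩ := mem_filter.mp hw
    exact ⟨w, hwt, hwv, hqu, hs.erase hu hqu fun _ _ hq' => hq'.eq hvt hq⟩
  · push Not at hex
    obtain ⟨w, hw, hwv⟩ : ∃ w ∈ {x ∈ t | f x ≠ f u}, w ≠ v := by
      refine exists_mem_ne_of_card_erase_pos ?_
      have hsplit := card_filter_add_card_filter_not (s := t) (fun x => f x = f u)
      have h1 := hs (f u)
      have h2 : #{x ∈ t | f x = f u} + _ = _ := card_filter_erase_add f hu (f u)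
      rw [card_erase_eq_ite]
      simp only [mem_filter, hvt, true_and, if_pos, ne_eq] at h1 h2 ⊢
      split_ifs at h1 ⊢ <;> omega
    obtain ⟨hwt, hwu⟩ := mem_filter.mp hw
    exact ⟨w, hwt, hwv, hwu, hs.erase hu hwu fun q hqu hq => absurd hq (hex q hqu)⟩

lemma IsBalanced.exists_isPath_support_eq {G : SimpleGraph V}
    (hG : ∀ a b, f a ≠ f b → G.Adj a b)
    (hs : IsBalanced f s u v) (hu : u ∈ s) (hv : v ∈ s) (huv : u ≠ v) :
    ∃ p : G.Walk u v, p.IsPath ∧ p.support.toFinset = s := by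
  induction s using Finset.strongInduction generalizing u with
  | H s ih =>
  have huvs : {u, v} ⊆ s := insert_subset hu (singleton_subset_iff.mpr hv)
  have hcard : 2 ≤ #s := card_pair huv ▸ card_le_card huvs
  obtain hcard2 | hcard3 : #s = 2 ∨ 3 ≤ #s := by omega
  · have hs2 : s = {u, v} :=
      (eq_of_subset_of_card_le huvs (by rw [card_pair huv]; omega)).symm
    have hf : f u ≠ f v := by
      intro h
      have := hs (f u)
      simp [hs2, card_pair huv, h, filter_true_of_mem] at this
    exact ⟨.cons (hG u v hf) .nil, by simp [huv], by simp [hs2]⟩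
  · obtain ⟨w, hw, hwv, hwu, hbal⟩ := hs.exists_next hu hv huv hcard3
    obtain ⟨p, hp, hsupp⟩ :=
      ih _ (erase_ssubset hu) hbal hw (mem_erase.mpr ⟨huv.symm, hv⟩) hwv
    refine ⟨.cons (hG u w hwu.symm) p, ?_, ?_⟩
    · rw [Walk.cons_isPath_iff, ← List.mem_toFinset, hsupp]
      exact ⟨hp, notMem_erase u s⟩
    · rw [Walk.support_cons, List.toFinset_cons, hsupp, insert_erase hu]

lemma IsBalanced.exists_isHamiltonian [Fintype V] {G : SimpleGraph V}
    (hG : ∀ a b, f a ≠ f b → G.Adj a b) (hs : IsBalanced f univ u v) (huv : u ≠ v) :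
    ∃ p : G.Walk u v, p.IsHamiltonian := by
  obtain ⟨p, hp, hsupp⟩ := hs.exists_isPath_support_eq hG (mem_univ u) (mem_univ v) huv
  exact ⟨p, hp.isHamiltonian_of_mem fun w => by simp [← List.mem_toFinset, hsupp]⟩

end SimpleGraph

open Multiplicative

namespace U6n

variable {n : ℕ}

def parity (n : ℕ) : ZMod (2 * n) →+* ZMod 2 := ZMod.castHom (dvd_mul_right 2 n) (ZMod 2)

lemma U6nAct_apply (r : Multiplicative (ZMod (2 * n))) (y : Multiplicative (ZMod 3)) :
    U6nAct n r y = if parity n (toAdd r) = 0 then y else y⁻¹ := by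
  obtain ⟨k, hk⟩ := ZMod.intCast_surjective (toAdd r)
  obtain rfl : r = ofAdd (k : ZMod (2 * n)) := by rw [hk]; rfl
  have hact : U6nAct n (ofAdd (k : ZMod (2 * n))) = negAut ^ k :=
    congrArg Additive.toMul (ZMod.lift_coe _ _ k)
  have hinv : negAut ^ (2 : ℤ) = 1 := by rw [zpow_two, negAut_sq]
  simp only [hact, toAdd_ofAdd, map_intCast, ZMod.intCast_eq_zero_iff_even]
  rcases Int.even_or_odd' k with ⟨m, rfl | rfl⟩
  · simp [zpow_mul, hinv]
  · rw [if_neg (Int.not_even_two_mul_add_one m), zpow_add, zpow_mul, hinv]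
    simp [negAut]

/-- Writing `u = b ^ x * a ^ j`, `bExp u = x` and `aParity u = j mod 2`. -/
def bExp (u : U6n n) : ZMod 3 := toAdd u.left

def aParity (u : U6n n) : ZMod 2 := parity n (toAdd u.right)

def twist (e : ZMod 2) (y : ZMod 3) : ZMod 3 := if e = 0 then y else -y

lemma bExp_mul (u v : U6n n) : bExp (u * v) = bExp u + twist (aParity u) (bExp v) := by
  simp only [bExp, aParity, twist, SemidirectProduct.mul_left, U6nAct_apply, toAdd_mul,
    apply_ite toAdd, toAdd_inv]
  rfl

lemma commute_iff (u v : U6n n) :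
    Commute u v ↔ bExp u + twist (aParity u) (bExp v) = bExp v + twist (aParity v) (bExp u) := by
  rw [← bExp_mul, ← bExp_mul]
  exact ⟨fun h => h.eq ▸ rfl,
    fun h => SemidirectProduct.ext (toAdd.injective h) (mul_comm _ _)⟩

@[simp] lemma bExp_Ua : bExp (Ua n) = 0 := rfl
@[simp] lemma aParity_Ua : aParity (Ua n) = 1 := map_one (parity n)
@[simp] lemma bExp_Ub : bExp (Ub n) = 1 := rfl
@[simp] lemma aParity_Ub : aParity (Ub n) = 0 := map_zero (parity n)

lemma mem_center_iff (z : U6n n) :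
    z ∈ Subgroup.center (U6n n) ↔ bExp z = 0 ∧ aParity z = 0 := by
  simp only [Subgroup.mem_center_iff, ← commute_iff_eq, commute_iff]
  constructor
  · intro h
    have ha := h (Ua n)
    have hb := h (Ub n)
    simp only [bExp_Ua, aParity_Ua, bExp_Ub, aParity_Ub] at ha hb
    revert ha hb
    generalize bExp z = x
    generalize aParity z = e
    revert x e
    decide
  · rintro ⟨hx, he⟩ g
    rw [hx, he]
    generalize bExp g = x
    generalize aParity g = e
    revert x e
    decide

def commClass (u : U6n n) : Option (ZMod 3) := if aParity u = 0 then none else some (bExp u)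

lemma commute_iff_commClass_eq {u v : U6n n} (hu : u ∉ Subgroup.center (U6n n))
    (hv : v ∉ Subgroup.center (U6n n)) : Commute u v ↔ commClass u = commClass v := by
  rw [mem_center_iff] at hu hv
  rw [commute_iff, commClass, commClass]
  revert hu hv
  generalize bExp u = x
  generalize aParity u = e
  generalize bExp v = y
  generalize aParity v = e'
  revert x e y e'
  decide

lemma commClass_eq_none_iff (u : U6n n) : commClass u = none ↔ aParity u = 0 := by
  unfold commClass; split_ifs with h <;> simp [h]

lemma commClass_eq_some_iff (u : U6n n) (c : ZMod 3) :
    commClass u = some c ↔ aParity u = 1 ∧ bExp u = c := by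
  have : aParity u ≠ 0 ↔ aParity u = 1 := by generalize aParity u = e; revert e; decide
  unfold commClass; split_ifs with h <;> simp [h, ← this]

instance : DecidablePred (· ∈ Subgroup.center (U6n n)) :=
  fun z => decidable_of_iff _ (mem_center_iff z).symm

abbrev Vertex (n : ℕ) := {x : U6n n // x ∉ Subgroup.center (U6n n)}

def commClassNoneEquiv : {v : Vertex n // commClass v.1 = none} ≃
    {x : ZMod 3 // x ≠ 0} × {j : ZMod (2 * n) // parity n j = 0} where
  toFun v :=
    (⟨bExp v.1.1, fun h =>
        v.1.2 ((mem_center_iff _).mpr ⟨h, (commClass_eq_none_iff _).mp v.2⟩)⟩,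
      ⟨toAdd v.1.1.right, (commClass_eq_none_iff _).mp v.2⟩)
  invFun p := ⟨⟨⟨ofAdd p.1.1, ofAdd p.2.1⟩, fun h => p.1.2 ((mem_center_iff _).mp h).1⟩,
      (commClass_eq_none_iff _).mpr p.2.2⟩
  left_inv _ := rfl
  right_inv _ := rfl

def commClassSomeEquiv (c : ZMod 3) : {v : Vertex n // commClass v.1 = some c} ≃
    {j : ZMod (2 * n) // parity n j = 1} where
  toFun v := ⟨toAdd v.1.1.right, ((commClass_eq_some_iff _ c).mp v.2).1⟩
  invFun j := ⟨⟨⟨ofAdd c, ofAdd j.1⟩, fun h => by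
        simpa [aParity, j.2] using ((mem_center_iff _).mp h).2⟩,
      (commClass_eq_some_iff _ c).mpr ⟨j.2, rfl⟩⟩
  left_inv v := by
    obtain ⟨⟨⟨l, r⟩, hv⟩, hc⟩ := v
    obtain rfl : l = ofAdd c := ((commClass_eq_some_iff _ c).mp hc).2
    rfl
  right_inv _ := rfl

section Counting

variable [NeZero n]

instance : Fintype (U6n n) := Fintype.ofEquiv _ SemidirectProduct.equivProd.symm

lemma card_parity_fiber (e : ZMod 2) : #{j : ZMod (2 * n) | parity n j = e} = n := by
  have hfib : ∀ e' : ZMod 2, #{j : ZMod (2 * n) | parity n j = e'} = #{j | parity n j = e} :=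
    fun e' => AddMonoidHom.card_fiber_eq_of_mem_range (parity n)
      (ZMod.ringHom_surjective _ e') (ZMod.ringHom_surjective _ e)
  have hsum := card_eq_sum_card_fiberwise (s := (univ : Finset (ZMod (2 * n))))
    (t := univ) (f := parity n) fun _ _ => mem_univ _
  rw [sum_congr rfl fun e' _ => hfib e', sum_const, card_univ, card_univ, ZMod.card, ZMod.card,
    smul_eq_mul] at hsum
  omega

lemma card_commClass_none : #{v : Vertex n | commClass v.1 = none} = 2 * n := by
  rw [← Fintype.card_subtype, Fintype.card_congr commClassNoneEquiv, Fintype.card_prod,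
    Fintype.card_subtype, Fintype.card_subtype, card_parity_fiber]
  rfl

lemma card_commClass_some (c : ZMod 3) : #{v : Vertex n | commClass v.1 = some c} = n := by
  rw [← Fintype.card_subtype, Fintype.card_congr (commClassSomeEquiv c), Fintype.card_subtype,
    card_parity_fiber]

lemma card_vertex : Fintype.card (Vertex n) = 5 * n := by
  rw [← card_univ, card_eq_sum_card_fiberwise (t := univ) (f := fun v : Vertex n => commClass v.1)
    fun _ _ => mem_univ _, Fintype.sum_option, card_commClass_none]
  simp only [card_commClass_some, sum_const, card_univ, ZMod.card, smul_eq_mul]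
  ring

lemma isBalanced_commClass (hn : 1 ≤ n) (u v : Vertex n) :
    SimpleGraph.IsBalanced (fun x : Vertex n => commClass x.1) univ u v := by
  intro q
  dsimp only
  have hq : #{x : Vertex n | commClass x.1 = q} ≤ 2 * n := by
    rcases q with _ | c
    · exact card_commClass_none.le
    · rw [card_commClass_some]; omega
  rw [card_univ, card_vertex]
  omega

end Counting

lemma ncGraph_adj_of_commClass_ne {a b : Vertex n} (h : commClass a.1 ≠ commClass b.1) :
    (ncGraph n).Adj a b :=
  fun hab => h ((commute_iff_commClass_eq a.2 b.2).mp hab)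

end U6n

/-- For every pair of distinct vertices `u, v` of the non-commuting graph of `U_{6n}`,
the detour distance `D(u,v)` (the maximum length of a path from `u` to `v`) equals
`5n - 1`. -/
theorem U6n_detour_distance (n : ℕ) (hn : 1 ≤ n)
    (u v : {x : U6n n // x ∉ Subgroup.center (U6n n)}) (huv : u ≠ v) :
    IsGreatest {k | ∃ p : (ncGraph n).Walk u v, p.IsPath ∧ p.length = k}
      (5 * n - 1) := by
  have : NeZero n := ⟨by omega⟩
  refine ⟨?_, ?_⟩
  · obtain ⟨p, hp⟩ := (U6n.isBalanced_commClass hn u v).exists_isHamiltonian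
      (fun _ _ h => U6n.ncGraph_adj_of_commClass_ne h) huv
    exact ⟨p, hp.isPath, by rw [hp.length_eq, U6n.card_vertex]⟩
  · rintro k ⟨p, hp, rfl⟩
    have := hp.length_lt
    rw [U6n.card_vertex] at this
    omega
end
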